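/- Let p be a prime and let F be an (n,w)-minihyper in PG(r,p) with w ≡ n − p (mod p²). Suppose every hyperplane H satisfies F(H) ≡ n − p or n (mod p²), and that every codimension-2 subspace T satisfies F(T) ≡ n + αp (mod p²) for some integer α depending on T. If T is a codimension-2 subspace with F(T) ≡ n (mod p), and x (resp. y) denotes the number of hyperplanes through T with F(H) ≡ n−p (mod p²) (resp. F(H) ≡ n (mod p²)), then x ≡ 0 (mod p) and y ≡ 1 (mod p); in particular y = 1 or y = p+1. -/
import Mathlib


open scoped BigOperators

noncomputable section

/-- Points of the projective geometry `PG(m-1, q)`, where the underlying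
vector space is `F^m`. -/
abbrev PGPt (F : Type) [Field F] (m : ℕ) := Projectivization F (Fin m → F)

/-- The multiplicity of a flat (given as a submodule of `F^m`) with respect to
a multiset of points `K`: the sum of the multiplicities of the points lying in the flat. -/
def fm {F : Type} [Field F] {m : ℕ} (K : PGPt F m → ℕ)
    (W : Submodule F (Fin m → F)) : ℕ :=
  ∑ᶠ P ∈ {P : PGPt F m | P.submodule ≤ W}, K P

/-- `K` is an `(n, w)`-minihyper in `PG(m-1, q)`: total multiplicity `n`, every
hyperplane (flat of projective dimension `m-2`, i.e. rank `m-1`) has multiplicity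
at least `w`, and some hyperplane has multiplicity exactly `w`. -/
def IsMinihyper {F : Type} [Field F] {m : ℕ} (K : PGPt F m → ℕ) (n w : ℕ) : Prop :=
  fm K ⊤ = n ∧
  (∀ H : Submodule F (Fin m → F), Module.finrank F H = m - 1 → w ≤ fm K H) ∧
  (∃ H : Submodule F (Fin m → F), Module.finrank F H = m - 1 ∧ fm K H = w)

/-- `K` is an `(n, w)`-arc in `PG(m-1, q)`. -/
def IsArc {F : Type} [Field F] {m : ℕ} (K : PGPt F m → ℕ) (n w : ℕ) : Prop :=
  fm K ⊤ = n ∧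
  (∀ H : Submodule F (Fin m → F), Module.finrank F H = m - 1 → fm K H ≤ w) ∧
  (∃ H : Submodule F (Fin m → F), Module.finrank F H = m - 1 ∧ fm K H = w)

/-- `v_k = (q^k - 1)/(q - 1)`, the number of points of `PG(k-1, q)`. -/
def vv (q k : ℕ) : ℕ := ∑ i ∈ Finset.range k, q ^ i


section Helpers
open Module

theorem card_proj (K V : Type) [Field K] [Fintype K] [AddCommGroup V] [Module K V] [Fintype V] :
    Nat.card (Projectivization K V) * (Fintype.card K - 1) = Fintype.card V - 1 := by
  classical
  have e1 : {v : V // v ≠ 0} ≃ Σ P : Projectivization K V, {u : {v : V // v ≠ 0} // Projectivization.mk' K u = P} :=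
    (Equiv.sigmaFiberEquiv (Projectivization.mk' K)).symm
  have e2 : ∀ P : Projectivization K V, Kˣ ≃ {u : {v : V // v ≠ 0} // Projectivization.mk' K u = P} := by
    intro P
    refine Equiv.ofBijective (fun a => ⟨⟨(a : K) • P.rep, smul_ne_zero a.ne_zero P.rep_nonzero⟩, ?_⟩) ⟨?_, ?_⟩
    · rw [Projectivization.mk'_eq_mk]
      conv_rhs => rw [← P.mk_rep]
      rw [Projectivization.mk_eq_mk_iff]
      exact ⟨a, rfl⟩
    · intro a b hab
      have h : (a : K) • P.rep = (b : K) • P.rep := congrArg (fun z => (z.1 : V)) hab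
      exact Units.ext (smul_left_injective K P.rep_nonzero h)
    · rintro ⟨⟨u, hu⟩, hP⟩
      rw [Projectivization.mk'_eq_mk] at hP
      conv_rhs at hP => rw [← P.mk_rep]
      rw [Projectivization.mk_eq_mk_iff] at hP
      obtain ⟨a, ha⟩ := hP
      refine ⟨a, ?_⟩
      simp only [Units.smul_def] at ha
      exact Subtype.ext (Subtype.ext ha)
  haveI : Finite (Projectivization K V) := Quotient.finite _
  haveI : Fintype (Projectivization K V) := Fintype.ofFinite _
  have h1 : Fintype.card {v : V // v ≠ 0} = Fintype.card V - 1 := by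
    simp [Fintype.card_subtype_compl]
  have h2 : Fintype.card {v : V // v ≠ 0} = Nat.card (Projectivization K V) * (Fintype.card K - 1) := by
    rw [Fintype.card_congr e1, Fintype.card_sigma]
    have h3 : ∀ P : Projectivization K V, Fintype.card {u : {v : V // v ≠ 0} // Projectivization.mk' K u = P} = Fintype.card K - 1 := by
      intro P
      rw [← Fintype.card_congr (e2 P), Fintype.card_units]
    calc ∑ P : Projectivization K V, Fintype.card {u : {v : V // v ≠ 0} // Projectivization.mk' K u = P}
        = ∑ _P : Projectivization K V, (Fintype.card K - 1) := Finset.sum_congr rfl (fun P _ => h3 P)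
      _ = Nat.card (Projectivization K V) * (Fintype.card K - 1) := by
          rw [Finset.sum_const, Finset.card_univ, Nat.card_eq_fintype_card, smul_eq_mul]
  omega

theorem lines_card (K V : Type) [Field K] [Fintype K] [AddCommGroup V] [Module K V] [Fintype V]
    (h2 : finrank K V = 2) :
    Nat.card {W : Submodule K V // finrank K W = 1} = Fintype.card K + 1 := by
  have hc := card_proj K V
  have hV : Fintype.card V = Fintype.card K ^ 2 := by
    rw [card_eq_pow_finrank (K := K) (V := V), h2]
  rw [Nat.card_congr (Projectivization.equivSubmodule K V)] at hc
  have hK : 2 ≤ Fintype.card K := Fintype.one_lt_card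
  have key : (Fintype.card K + 1) * (Fintype.card K - 1) = Fintype.card K ^ 2 - 1 := by
    have h1 : 1 ≤ Fintype.card K ^ 2 := Nat.one_le_pow _ _ (by omega)
    zify [h1, (by omega : 1 ≤ Fintype.card K)]
    ring
  have hmul : Nat.card {W : Submodule K V // finrank K W = 1} * (Fintype.card K - 1)
      = (Fintype.card K + 1) * (Fintype.card K - 1) := by rw [hc, hV, key]
  exact Nat.eq_of_mul_eq_mul_right (by omega) hmul

theorem finrank_comap_mkQ (K V : Type) [Field K] [AddCommGroup V] [Module K V]
    [FiniteDimensional K V] (T : Submodule K V) (W : Submodule K (V ⧸ T)) :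
    finrank K (W.comap T.mkQ) = finrank K W + finrank K T := by
  set H := W.comap T.mkQ
  have hTH : T ≤ H := by
    intro x hx
    simp [H, Submodule.mem_comap, Submodule.Quotient.mk_eq_zero, hx,
      Submodule.mkQ_apply, (Submodule.Quotient.mk_eq_zero T).2 hx]
  have hmap : H.map T.mkQ = W := Submodule.map_comap_eq_of_surjective T.mkQ_surjective W
  -- rank-nullity for mkQ restricted to H
  have := LinearMap.finrank_range_add_finrank_ker (T.mkQ.comp H.subtype)
  have hrange : LinearMap.range (T.mkQ.comp H.subtype) = W := by
    rw [LinearMap.range_comp, Submodule.range_subtype, hmap]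
  have hker : LinearMap.ker (T.mkQ.comp H.subtype) = T.comap H.subtype := by
    rw [LinearMap.ker_comp, Submodule.ker_mkQ]
  have hkerrank : finrank K (LinearMap.ker (T.mkQ.comp H.subtype)) = finrank K T := by
    rw [hker]
    have e := Submodule.comapSubtypeEquivOfLe hTH
    exact e.finrank_eq
  rw [hrange, hkerrank] at this
  exact this.symm

theorem hyp_card (K V : Type) [Field K] [Fintype K] [AddCommGroup V] [Module K V] [Fintype V]
    {r : ℕ} (hr : 1 ≤ r) (hV : finrank K V = r + 1)
    (T : Submodule K V) (hT : finrank K T = r - 1) :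
    Nat.card {H : Submodule K V // finrank K H = r ∧ T ≤ H} = Fintype.card K + 1 := by
  classical
  haveI : Finite (V ⧸ T) := Quotient.finite _
  haveI : Fintype (V ⧸ T) := Fintype.ofFinite _
  have hQ : finrank K (V ⧸ T) = 2 := by
    have := Submodule.finrank_quotient_add_finrank T
    rw [hV, hT] at this; omega
  have hle : ∀ W : Submodule K (V ⧸ T), T ≤ W.comap T.mkQ := by
    intro W x hx
    simp [Submodule.mem_comap, (Submodule.Quotient.mk_eq_zero T).2 hx]
  have e : {W : Submodule K (V ⧸ T) // finrank K W = 1} ≃ {H : Submodule K V // finrank K H = r ∧ T ≤ H} := by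
    refine Equiv.ofBijective (fun W => ⟨W.1.comap T.mkQ, ?_, hle W.1⟩) ⟨?_, ?_⟩
    · rw [finrank_comap_mkQ, W.2, hT]; omega
    · intro W W' h
      have h1 : W.1.comap T.mkQ = W'.1.comap T.mkQ := congrArg Subtype.val h
      have := Submodule.comap_injective_of_surjective T.mkQ_surjective h1
      exact Subtype.ext this
    · rintro ⟨H, hHr, hTH⟩
      refine ⟨⟨H.map T.mkQ, ?_⟩, ?_⟩
      · have hcm : (H.map T.mkQ).comap T.mkQ = H := by
          rw [Submodule.comap_map_mkQ, sup_eq_right.2 hTH]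
        have := finrank_comap_mkQ K V T (H.map T.mkQ)
        rw [hcm, hHr, hT] at this; omega
      · apply Subtype.ext
        show (H.map T.mkQ).comap T.mkQ = H
        rw [Submodule.comap_map_mkQ, sup_eq_right.2 hTH]
  rw [← Nat.card_congr e, lines_card K (V ⧸ T) hQ]


theorem fm_eq_sum {F : Type} [Field F] {m : ℕ} [Fintype (PGPt F m)]
    (K : PGPt F m → ℕ) (W : Submodule F (Fin m → F)) :
    fm K W = ∑ P : PGPt F m, Set.indicator {P : PGPt F m | P.submodule ≤ W} K P := by
  rw [fm, finsum_mem_def, finsum_eq_sum_of_fintype]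

theorem unique_hyp {F : Type} [Field F] {r : ℕ} (hr : 1 ≤ r)
    (T : Submodule F (Fin (r + 1) → F)) (hT : finrank F T = r - 1)
    (P : PGPt F (r + 1)) (hP : ¬ P.submodule ≤ T)
    (H : Submodule F (Fin (r + 1) → F)) :
    (finrank F H = r ∧ T ≤ H ∧ P.submodule ≤ H) ↔ H = T ⊔ P.submodule := by
  have hinf : T ⊓ P.submodule = ⊥ := by
    rw [eq_bot_iff]
    intro x hx
    rw [Submodule.mem_inf] at hx
    obtain ⟨hxT, hxP⟩ := hx
    rw [Projectivization.submodule_eq, Submodule.mem_span_singleton] at hxP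
    obtain ⟨c, rfl⟩ := hxP
    rcases eq_or_ne c 0 with rfl | hc
    · simp
    · exfalso
      apply hP
      rw [Projectivization.submodule_eq, Submodule.span_le, Set.singleton_subset_iff]
      have : c⁻¹ • (c • P.rep) ∈ T := T.smul_mem _ hxT
      rwa [smul_smul, inv_mul_cancel₀ hc, one_smul] at this
  have hsup : finrank F (T ⊔ P.submodule : Submodule F (Fin (r + 1) → F)) = r := by
    have := Submodule.finrank_sup_add_finrank_inf_eq T P.submodule
    rw [hinf, hT, P.finrank_submodule, finrank_bot] at this
    omega
  constructor
  · rintro ⟨hHr, hTH, hPH⟩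
    exact (Submodule.eq_of_le_of_finrank_eq (sup_le hTH hPH) (by rw [hsup, hHr])).symm
  · rintro rfl
    exact ⟨hsup, le_sup_left, le_sup_right⟩

theorem sum_formula {F : Type} [Field F] [Fintype F] {r : ℕ} (hr : 1 ≤ r)
    (K : PGPt F (r + 1) → ℕ)
    (T : Submodule F (Fin (r + 1) → F)) (hT : finrank F T = r - 1) :
    ∑ᶠ H ∈ {H : Submodule F (Fin (r + 1) → F) | finrank F H = r ∧ T ≤ H}, fm K H
      = fm K ⊤ + Fintype.card F * fm K T := by
  classical
  haveI : Finite (Submodule F (Fin (r + 1) → F)) :=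
    Finite.of_injective _ (SetLike.coe_injective (A := Submodule F (Fin (r + 1) → F)))
  haveI : Fintype (Submodule F (Fin (r + 1) → F)) := Fintype.ofFinite _
  haveI : Finite (PGPt F (r + 1)) := Quotient.finite _
  haveI : Fintype (PGPt F (r + 1)) := Fintype.ofFinite _
  have hV : finrank F (Fin (r + 1) → F) = r + 1 := by simp
  set S : Finset (Submodule F (Fin (r + 1) → F)) :=
    Finset.univ.filter (fun H => finrank F H = r ∧ T ≤ H) with hS
  have hSset : {H : Submodule F (Fin (r + 1) → F) | finrank F H = r ∧ T ≤ H} = ↑S := by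
    ext H; simp [hS]
  rw [hSset, finsum_mem_coe_finset]
  have hcardS : S.card = Fintype.card F + 1 := by
    rw [← hyp_card F (Fin (r + 1) → F) hr hV T hT, Nat.card_eq_fintype_card,
      Fintype.card_subtype]
  have step1 : ∑ H ∈ S, fm K H
      = ∑ P : PGPt F (r + 1), (S.filter (fun H => P.submodule ≤ H)).card * K P := by
    simp_rw [fm_eq_sum]
    rw [Finset.sum_comm]
    refine Finset.sum_congr rfl fun P _ => ?_
    simp only [Set.indicator_apply, Set.mem_setOf_eq]
    rw [← Finset.sum_filter, Finset.sum_const, smul_eq_mul]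
  have hfilter : ∀ P : PGPt F (r + 1), (S.filter (fun H => P.submodule ≤ H)).card
      = if P.submodule ≤ T then Fintype.card F + 1 else 1 := by
    intro P
    by_cases hP : P.submodule ≤ T
    · rw [if_pos hP]
      have heq : S.filter (fun H => P.submodule ≤ H) = S := by
        apply Finset.filter_true_of_mem
        intro H hH
        rw [hS, Finset.mem_filter] at hH
        exact hP.trans hH.2.2
      rw [heq, hcardS]
    · rw [if_neg hP, Finset.card_eq_one]
      refine ⟨T ⊔ P.submodule, ?_⟩
      ext H
      simp only [Finset.mem_filter, Finset.mem_singleton, hS, Finset.mem_univ, true_and]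
      rw [← unique_hyp hr T hT P hP H]
      tauto
  rw [step1]
  have hsplit : ∀ P : PGPt F (r + 1), (S.filter (fun H => P.submodule ≤ H)).card * K P
      = K P + (if P.submodule ≤ T then Fintype.card F * K P else 0) := by
    intro P; rw [hfilter P]; split <;> ring
  simp_rw [hsplit]
  rw [Finset.sum_add_distrib]
  congr 1
  · rw [fm_eq_sum]
    refine (Finset.sum_congr rfl fun P _ => ?_).symm
    exact Set.indicator_of_mem (Set.mem_setOf_eq ▸ (le_top : P.submodule ≤ ⊤)) K
  · rw [fm_eq_sum, Finset.mul_sum]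
    refine Finset.sum_congr rfl fun P _ => ?_
    rw [Set.indicator_apply]
    simp only [Set.mem_setOf_eq]
    split <;> simp

end Helpers

set_option maxHeartbeats 1000000 in
/-- counting the hyperplanes of the two congruence classes through
a codimension-2 subspace `T` with `F(T) ≡ n (mod p)`. -/
theorem stmt6 (p : ℕ) [Fact p.Prime] {r : ℕ} (hr : 1 ≤ r)
    (K : PGPt (ZMod p) (r + 1) → ℕ) (n w : ℕ) (hK : IsMinihyper K n w)
    (hw : (w : ℤ) ≡ (n : ℤ) - (p : ℤ) [ZMOD ((p : ℤ) ^ 2)])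
    (hH : ∀ H : Submodule (ZMod p) (Fin (r + 1) → ZMod p), Module.finrank (ZMod p) H = r →
      (fm K H : ℤ) ≡ (n : ℤ) - (p : ℤ) [ZMOD ((p : ℤ) ^ 2)] ∨
      (fm K H : ℤ) ≡ (n : ℤ) [ZMOD ((p : ℤ) ^ 2)])
    (hT2 : ∀ T : Submodule (ZMod p) (Fin (r + 1) → ZMod p),
      Module.finrank (ZMod p) T = r - 1 →
      ∃ α : ℤ, (fm K T : ℤ) ≡ (n : ℤ) + α * (p : ℤ) [ZMOD ((p : ℤ) ^ 2)])
    (T : Submodule (ZMod p) (Fin (r + 1) → ZMod p))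
    (hT : Module.finrank (ZMod p) T = r - 1)
    (hTn : (fm K T : ℤ) ≡ (n : ℤ) [ZMOD (p : ℤ)])
    (x y : ℕ)
    (hx : x = Set.ncard {H : Submodule (ZMod p) (Fin (r + 1) → ZMod p) |
      Module.finrank (ZMod p) H = r ∧ T ≤ H ∧
      (fm K H : ℤ) ≡ (n : ℤ) - (p : ℤ) [ZMOD ((p : ℤ) ^ 2)]})
    (hy : y = Set.ncard {H : Submodule (ZMod p) (Fin (r + 1) → ZMod p) |
      Module.finrank (ZMod p) H = r ∧ T ≤ H ∧
      (fm K H : ℤ) ≡ (n : ℤ) [ZMOD ((p : ℤ) ^ 2)]}) :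
    x % p = 0 ∧ y % p = 1 ∧ (y = 1 ∨ y = p + 1) := by
  classical
  have hp : p.Prime := Fact.out
  haveI : NeZero p := ⟨hp.ne_zero⟩
  haveI : Finite (Submodule (ZMod p) (Fin (r + 1) → ZMod p)) :=
    Finite.of_injective _ (SetLike.coe_injective (A := Submodule (ZMod p) (Fin (r + 1) → ZMod p)))
  haveI : Fintype (Submodule (ZMod p) (Fin (r + 1) → ZMod p)) := Fintype.ofFinite _
  set S : Finset (Submodule (ZMod p) (Fin (r + 1) → ZMod p)) :=
    Finset.univ.filter (fun H => Module.finrank (ZMod p) H = r ∧ T ≤ H) with hS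
  have hV : Module.finrank (ZMod p) (Fin (r + 1) → ZMod p) = r + 1 := by simp
  have hcardS : S.card = p + 1 := by
    have h := hyp_card (ZMod p) (Fin (r + 1) → ZMod p) hr hV T hT
    rw [Nat.card_eq_fintype_card, Fintype.card_subtype] at h
    rw [hS]
    simpa [ZMod.card] using h
  set Sx := S.filter (fun H => (fm K H : ℤ) ≡ (n : ℤ) - (p : ℤ) [ZMOD ((p : ℤ) ^ 2)]) with hSx
  set Sy := S.filter (fun H => (fm K H : ℤ) ≡ (n : ℤ) [ZMOD ((p : ℤ) ^ 2)]) with hSy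
  have hxc : x = Sx.card := by
    rw [hx]
    have hs : {H : Submodule (ZMod p) (Fin (r + 1) → ZMod p) |
        Module.finrank (ZMod p) H = r ∧ T ≤ H ∧
        (fm K H : ℤ) ≡ (n : ℤ) - (p : ℤ) [ZMOD ((p : ℤ) ^ 2)]} = ↑Sx := by
      ext H
      simp only [hSx, hS, Finset.coe_filter, Finset.mem_filter, Finset.mem_univ, true_and,
        Set.mem_setOf_eq]
      tauto
    rw [hs, Set.ncard_coe_finset]
  have hyc : y = Sy.card := by
    rw [hy]
    have hs : {H : Submodule (ZMod p) (Fin (r + 1) → ZMod p) |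
        Module.finrank (ZMod p) H = r ∧ T ≤ H ∧
        (fm K H : ℤ) ≡ (n : ℤ) [ZMOD ((p : ℤ) ^ 2)]} = ↑Sy := by
      ext H
      simp only [hSy, hS, Finset.coe_filter, Finset.mem_filter, Finset.mem_univ, true_and,
        Set.mem_setOf_eq]
      tauto
    rw [hs, Set.ncard_coe_finset]
  have hdisj : Disjoint Sx Sy := by
    rw [Finset.disjoint_left]
    intro H hHx hHy
    rw [hSx, Finset.mem_filter] at hHx
    rw [hSy, Finset.mem_filter] at hHy
    have hdvd : ((p : ℤ) ^ 2) ∣ ((n : ℤ) - ((n : ℤ) - (p : ℤ))) := (hHx.2.symm.trans hHy.2).dvd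
    have hdvd' : ((p : ℤ) ^ 2) ∣ (p : ℤ) := by simpa using hdvd
    have hle := Int.le_of_dvd (by exact_mod_cast hp.pos) hdvd'
    have h2 := hp.two_le
    nlinarith [hle, (by exact_mod_cast h2 : (2 : ℤ) ≤ (p : ℤ))]
  have hunion : Sx ∪ Sy = S := by
    ext H
    rw [Finset.mem_union]
    simp only [hSx, hSy, Finset.mem_filter]
    constructor
    · rintro (h | h) <;> exact h.1
    · intro hHS
      have hrk : Module.finrank (ZMod p) H = r := by
        rw [hS, Finset.mem_filter] at hHS; exact hHS.2.1
      rcases hH H hrk with hc | hc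
      · exact Or.inl ⟨hHS, hc⟩
      · exact Or.inr ⟨hHS, hc⟩
  have hxy : x + y = p + 1 := by
    rw [hxc, hyc, ← Finset.card_union_of_disjoint hdisj, hunion, hcardS]
  have hsumN : ∑ H ∈ S, fm K H = n + p * fm K T := by
    have h := sum_formula hr K T hT
    have hset : {H : Submodule (ZMod p) (Fin (r + 1) → ZMod p) |
        Module.finrank (ZMod p) H = r ∧ T ≤ H} = ↑S := by
      ext H
      simp only [hS, Finset.coe_filter, Finset.mem_univ, true_and, Set.mem_setOf_eq]
    rw [hset, finsum_mem_coe_finset, hK.1, ZMod.card] at h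
    exact h
  -- pass to ZMod (p ^ 2)
  haveI : NeZero (p ^ 2) := ⟨pow_ne_zero 2 hp.ne_zero⟩
  have hcast : ∀ a b : ℤ, a ≡ b [ZMOD ((p : ℤ) ^ 2)] →
      ((a : ZMod (p ^ 2)) = (b : ZMod (p ^ 2))) := by
    intro a b h
    rw [ZMod.intCast_eq_intCast_iff]
    exact_mod_cast h
  have hx2 : ∑ H ∈ Sx, ((fm K H : ℕ) : ZMod (p ^ 2))
      = (x : ZMod (p ^ 2)) * ((n : ZMod (p ^ 2)) - (p : ZMod (p ^ 2))) := by
    have hterm : ∀ H ∈ Sx, ((fm K H : ℕ) : ZMod (p ^ 2))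
        = ((n : ZMod (p ^ 2)) - (p : ZMod (p ^ 2))) := by
      intro H hHx
      have hc := hcast _ _ (Finset.mem_filter.1 hHx).2
      push_cast at hc ⊢
      exact hc
    rw [Finset.sum_congr rfl hterm, Finset.sum_const, nsmul_eq_mul, hxc]
  have hy2 : ∑ H ∈ Sy, ((fm K H : ℕ) : ZMod (p ^ 2))
      = (y : ZMod (p ^ 2)) * (n : ZMod (p ^ 2)) := by
    have hterm : ∀ H ∈ Sy, ((fm K H : ℕ) : ZMod (p ^ 2)) = (n : ZMod (p ^ 2)) := by
      intro H hHy
      have hc := hcast _ _ (Finset.mem_filter.1 hHy).2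
      push_cast at hc ⊢
      exact hc
    rw [Finset.sum_congr rfl hterm, Finset.sum_const, nsmul_eq_mul, hyc]
  have hpsq : (p : ZMod (p ^ 2)) ^ 2 = 0 := by
    have : ((p ^ 2 : ℕ) : ZMod (p ^ 2)) = 0 := ZMod.natCast_self _
    push_cast at this
    exact this
  have hfT : (p : ZMod (p ^ 2)) * ((fm K T : ℕ) : ZMod (p ^ 2))
      = (p : ZMod (p ^ 2)) * (n : ZMod (p ^ 2)) := by
    obtain ⟨k, hk⟩ := hTn.dvd
    have hc := congrArg (fun t : ℤ => (t : ZMod (p ^ 2))) hk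
    push_cast at hc
    have : ((fm K T : ℕ) : ZMod (p ^ 2)) = (n : ZMod (p ^ 2)) - (p : ZMod (p ^ 2)) * k := by
      linear_combination -hc
    rw [this]
    linear_combination (-(k : ZMod (p ^ 2))) * hpsq
  have hEq : (n : ZMod (p ^ 2)) + (p : ZMod (p ^ 2)) * (n : ZMod (p ^ 2))
      = (x : ZMod (p ^ 2)) * ((n : ZMod (p ^ 2)) - (p : ZMod (p ^ 2)))
        + (y : ZMod (p ^ 2)) * (n : ZMod (p ^ 2)) := by
    have hc := congrArg (fun t : ℕ => (t : ZMod (p ^ 2))) hsumN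
    push_cast at hc
    rw [← hunion, Finset.sum_union hdisj, hx2, hy2] at hc
    rw [← hfT]
    exact hc.symm
  have hxyR : (x : ZMod (p ^ 2)) + (y : ZMod (p ^ 2)) = (p : ZMod (p ^ 2)) + 1 := by
    have := congrArg (fun t : ℕ => (t : ZMod (p ^ 2))) hxy
    push_cast at this
    exact this
  have hxp0 : ((x * p : ℕ) : ZMod (p ^ 2)) = 0 := by
    push_cast
    linear_combination hEq + (n : ZMod (p ^ 2)) * hxyR
  rw [ZMod.natCast_eq_zero_iff, pow_two] at hxp0
  have hpx : p ∣ x := (Nat.mul_dvd_mul_iff_right hp.pos).1 hxp0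
  obtain ⟨k, hkx⟩ := hpx
  have h2 := hp.two_le
  have hk1 : k ≤ 1 := by
    by_contra hk
    push_neg at hk
    have : p * 2 ≤ p * k := Nat.mul_le_mul_left p hk
    omega
  interval_cases k
  · -- x = 0, y = p + 1
    have hx0 : x = 0 := by omega
    have hy0 : y = p + 1 := by omega
    refine ⟨by simp [hx0], ?_, Or.inr hy0⟩
    rw [hy0]
    rw [Nat.add_mod_left]
    exact Nat.mod_eq_of_lt hp.one_lt
  · -- x = p, y = 1
    have hx0 : x = p := by omega
    have hy0 : y = 1 := by omega
    refine ⟨by simp [hx0], ?_, Or.inl hy0⟩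
    rw [hy0]
    exact Nat.mod_eq_of_lt hp.one_lt
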